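/- arXiv:1807.08257 — 6 statements merged into one kernel-verified Lean document; each statement's English description precedes it below -/
import Mathlib

section
/- Any simple closed curve γ : S¹ → ℝ³ whose range Γ satisfies ½(Γ+Γ) = [0,1]³ is not rectifiable; that is, no rectifiable curve γ : [a,b] → ℝ³ has range Γ with ½(Γ+Γ) = [0,1]³. -/
/-!
The arclength reparametrization of a rectifiable curve is 1-Lipschitz, so `Γ + Γ` is the image
of a subset of `ℝ²` under a Lipschitz map and has Hausdorff dimension at most `2`. Halving does
not increase Hausdorff dimension, whereas the cube `[0,1]³` has Hausdorff dimension `3`.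
-/

open Set Pointwise
open scoped NNReal ENNReal

theorem HasConstantSpeedOnWith.lipschitzOnWith {E : Type*} [PseudoEMetricSpace E] {f : ℝ → E}
    {s : Set ℝ} {l : ℝ≥0} (h : HasConstantSpeedOnWith f s l) : LipschitzOnWith l f s := by
  intro x hx y hy
  wlog hxy : x ≤ y generalizing x y
  · rw [edist_comm, edist_comm x]
    exact this hy hx (le_of_not_ge hxy)
  calc edist (f x) (f y) ≤ eVariationOn f (s ∩ Icc x y) :=
        eVariationOn.edist_le f ⟨hx, le_rfl, hxy⟩ ⟨hy, hxy, le_rfl⟩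
    _ = ENNReal.ofReal (l * (y - x)) := h hx hy
    _ = l * edist x y := by
        rw [edist_dist, Real.dist_eq, abs_sub_comm, abs_of_nonneg (sub_nonneg.2 hxy),
          ENNReal.ofReal_mul l.coe_nonneg, ENNReal.ofReal_coe_nnreal]

theorem LocallyBoundedVariationOn.exists_lipschitzOnWith_image_eq {α E : Type*} [LinearOrder α]
    [EMetricSpace E] [Nonempty E] {f : α → E} {s : Set α} (hf : LocallyBoundedVariationOn f s) :
    ∃ (t : Set ℝ) (g : ℝ → E), LipschitzOnWith 1 g t ∧ g '' t = f '' s := by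
  rcases s.eq_empty_or_nonempty with rfl | ⟨a, ha⟩
  · exact ⟨∅, fun _ => Classical.arbitrary E, lipschitzOnWith_empty _ _, by simp⟩
  refine ⟨variationOnFromTo f s a '' s, naturalParameterization f s a,
    (has_unit_speed_naturalParameterization f hf ha).lipschitzOnWith, ?_⟩
  rw [image_image]
  exact image_congr fun b hb => edist_eq_zero.1 (edist_naturalParameterization_eq_zero hf ha hb)

theorem LipschitzOnWith.dimH_image_add_image_le_two {E : Type*} [NormedAddCommGroup E]
    {g h : ℝ → E} {s t : Set ℝ} {Kg Kh : ℝ≥0} (hg : LipschitzOnWith Kg g s)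
    (hh : LipschitzOnWith Kh h t) : dimH (g '' s + h '' t) ≤ 2 := by
  have hsum : LipschitzOnWith (Kg * 1 + Kh * 1) (fun p : ℝ × ℝ => g p.1 + h p.2) (s ×ˢ t) :=
    (hg.comp LipschitzWith.prod_fst.lipschitzOnWith fun _ hp => hp.1).add
      (hh.comp LipschitzWith.prod_snd.lipschitzOnWith fun _ hp => hp.2)
  calc dimH (g '' s + h '' t) = dimH ((fun p : ℝ × ℝ => g p.1 + h p.2) '' s ×ˢ t) := by
        rw [← image2_add, image2_image_left, image2_image_right, ← image_prod]
    _ ≤ dimH (univ : Set (ℝ × ℝ)) := hsum.dimH_image_le.trans (dimH_mono (subset_univ _))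
    _ = 2 := by
        rw [Real.dimH_univ_eq_finrank, Module.finrank_prod, Module.finrank_self]
        norm_num

theorem dimH_smul_set_le {𝕜 E : Type*} [NormedField 𝕜] [NormedAddCommGroup E]
    [NormedSpace 𝕜 E] (c : 𝕜) (s : Set E) : dimH (c • s) ≤ dimH s :=
  (lipschitzWith_smul c).dimH_image_le s

theorem dimH_unitCube_euclideanSpace (ι : Type*) [Fintype ι] :
    dimH (WithLp.ofLp ⁻¹' univ.pi (fun _ : ι => Icc (0 : ℝ) 1) : Set (EuclideanSpace ℝ ι)) =
      Fintype.card ι := by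
  have hcube : univ.pi (fun _ : ι => Icc (0 : ℝ) 1) ∈ nhds (fun _ => (2⁻¹ : ℝ)) :=
    set_pi_mem_nhds finite_univ fun _ _ => Icc_mem_nhds (by norm_num) (by norm_num)
  rw [Real.dimH_of_mem_nhds (x := WithLp.toLp 2 fun _ => (2⁻¹ : ℝ))
    ((PiLp.continuous_ofLp 2 _).continuousAt.preimage_mem_nhds hcube), finrank_euclideanSpace]

/-- No rectifiable curve `γ : [a,b] → ℝ³` (continuous with finite total variation) has a
range `Γ` with `½(Γ+Γ) = [0,1]³`; in particular any simple closed curve whose range `Γ`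
satisfies `½(Γ+Γ) = [0,1]³` is not rectifiable. -/
theorem stmt_5 (Γ : Set (EuclideanSpace ℝ (Fin 3)))
    (hΓ : (2⁻¹ : ℝ) • (Γ + Γ) = (WithLp.ofLp ⁻¹' Set.univ.pi (fun _ : Fin 3 => Set.Icc (0 : ℝ) 1) : Set (EuclideanSpace ℝ (Fin 3)))) :
    ¬ ∃ (a b : ℝ) (γ : ℝ → EuclideanSpace ℝ (Fin 3)),
        ContinuousOn γ (Set.Icc a b) ∧ BoundedVariationOn γ (Set.Icc a b) ∧
        γ '' Set.Icc a b = Γ := by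
  rintro ⟨a, b, γ, -, hγ, rfl⟩
  obtain ⟨t, g, hg, hgt⟩ := hγ.locallyBoundedVariationOn.exists_lipschitzOnWith_image_eq
  have hdim : dimH ((2⁻¹ : ℝ) • (γ '' Icc a b + γ '' Icc a b)) ≤ 2 :=
    (dimH_smul_set_le _ _).trans (hgt ▸ hg.dimH_image_add_image_le_two hg)
  rw [hΓ, dimH_unitCube_euclideanSpace, Fintype.card_fin] at hdim
  norm_num at hdim
end

section
/- For the Cantor ternary set C ⊆ [0,1], the Minkowski sum C + C equals the interval [0,2]. -/
/-!
Each stage `Cₙ` of the construction of the Cantor set satisfies `Cₙ + Cₙ ⊇ [0, 2]`: since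
`Cₙ₊₁ = Cₙ / 3 ∪ (2 + Cₙ) / 3`, the sum `Cₙ₊₁ + Cₙ₊₁` contains `[0, 2] / 3`, `(2 + [0, 2]) / 3`
and `(4 + [0, 2]) / 3`, which cover `[0, 2]`. A decomposition `x = a + b` at every finite
stage passes to the limit by Cantor's intersection theorem, applied to the decreasing compact
sets `{a ∈ Cₙ | x - a ∈ Cₙ}`.
-/

open Set Pointwise

theorem iInter_add_subset_iInter_add_iInter {G : Type*} [AddGroup G] [TopologicalSpace G]
    [IsTopologicalAddGroup G] {K L : ℕ → Set G} (hK : Antitone K) (hL : Antitone L)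
    (hK₀ : IsCompact (K 0)) (hKc : ∀ n, IsClosed (K n)) (hLc : ∀ n, IsClosed (L n)) :
    ⋂ n, (K n + L n) ⊆ (⋂ n, K n) + ⋂ n, L n := by
  intro x hx
  set S : ℕ → Set G := fun n ↦ K n ∩ (-· + x) ⁻¹' L n
  have hS_nonempty (n : ℕ) : (S n).Nonempty := by
    obtain ⟨a, ha, b, hb, rfl⟩ := mem_iInter.mp hx n
    exact ⟨a, ha, by rwa [mem_preimage, neg_add_cancel_left]⟩
  have hS_closed (n : ℕ) : IsClosed (S n) :=
    (hKc n).inter ((hLc n).preimage (continuous_neg.add continuous_const))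
  have hS_succ (n : ℕ) : S (n + 1) ⊆ S n :=
    inter_subset_inter (hK n.le_succ) (preimage_mono (hL n.le_succ))
  obtain ⟨a, ha⟩ := IsCompact.nonempty_iInter_of_sequence_nonempty_isCompact_isClosed S hS_succ
    hS_nonempty (hK₀.of_isClosed_subset (hS_closed 0) inter_subset_left) hS_closed
  simp only [S, mem_iInter, mem_inter_iff, mem_preimage] at ha
  exact ⟨a, mem_iInter.mpr fun n ↦ (ha n).1, -a + x, mem_iInter.mpr fun n ↦ (ha n).2,
    add_neg_cancel_left a x⟩

theorem Icc_zero_two_subset_preCantorSet_add (n : ℕ) :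
    Icc (0 : ℝ) 2 ⊆ preCantorSet n + preCantorSet n := by
  induction n with
  | zero =>
    rintro x ⟨hx₀, hx₂⟩
    rcases le_total x 1 with hx | hx
    · exact ⟨x, ⟨hx₀, hx⟩, 0, ⟨le_rfl, zero_le_one⟩, add_zero x⟩
    · exact ⟨1, ⟨zero_le_one, le_rfl⟩, x - 1, ⟨by linarith, by linarith⟩, by ring⟩
  | succ n ih =>
    rintro x ⟨hx₀, hx₂⟩
    have left (a : ℝ) (ha : a ∈ preCantorSet n) : a / 3 ∈ preCantorSet (n + 1) :=
      Or.inl ⟨a, ha, rfl⟩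
    have right (a : ℝ) (ha : a ∈ preCantorSet n) : (2 + a) / 3 ∈ preCantorSet (n + 1) :=
      Or.inr ⟨a, ha, rfl⟩
    rcases le_total x (2 / 3) with h₁ | h₁
    · obtain ⟨a, ha, b, hb, hab⟩ := ih (a := 3 * x) ⟨by linarith, by linarith⟩
      exact ⟨_, left a ha, _, left b hb, by linarith⟩
    rcases le_total x (4 / 3) with h₂ | h₂
    · obtain ⟨a, ha, b, hb, hab⟩ := ih (a := 3 * x - 2) ⟨by linarith, by linarith⟩
      exact ⟨_, left a ha, _, right b hb, by linarith⟩
    · obtain ⟨a, ha, b, hb, hab⟩ := ih (a := 3 * x - 4) ⟨by linarith, by linarith⟩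
      exact ⟨_, right a ha, _, right b hb, by linarith⟩

/-- For the Cantor ternary set `C ⊆ [0,1]`, the Minkowski sum `C + C` equals `[0,2]`. -/
theorem stmt_6 : cantorSet + cantorSet = Set.Icc (0 : ℝ) 2 := by
  refine Subset.antisymm ?_ ?_
  · calc cantorSet + cantorSet ⊆ Icc (0 : ℝ) 1 + Icc 0 1 :=
          add_subset_add cantorSet_subset_unitInterval cantorSet_subset_unitInterval
      _ ⊆ Icc (0 + 0) (1 + 1) := Icc_add_Icc_subset 0 1 0 1
      _ = Icc 0 2 := by norm_num
  · calc Icc (0 : ℝ) 2 ⊆ ⋂ n, (preCantorSet n + preCantorSet n) :=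
          subset_iInter Icc_zero_two_subset_preCantorSet_add
      _ ⊆ cantorSet + cantorSet :=
          iInter_add_subset_iInter_add_iInter preCantorSet_antitone preCantorSet_antitone
            isCompact_Icc isClosed_preCantorSet isClosed_preCantorSet
end

section
/- For the Cantor ternary set C ⊆ [0,1], one has ½C + ½C = [0,1], where ½C = {x/2 : x ∈ C}. -/
open Set Pointwise

lemma preCantorSet_antitone' (n : ℕ) : preCantorSet (n + 1) ⊆ preCantorSet n := by
  induction n with
  | zero =>
    rintro x (⟨y, hy, rfl⟩ | ⟨y, hy, rfl⟩) <;>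
      · simp only [preCantorSet_zero, Set.mem_Icc] at hy ⊢
        constructor <;> linarith [hy.1, hy.2]
  | succ n ih =>
    rintro x (⟨y, hy, rfl⟩ | ⟨y, hy, rfl⟩)
    · exact Or.inl ⟨y, ih hy, rfl⟩
    · exact Or.inr ⟨y, ih hy, rfl⟩

lemma preCantorSet_sum (n : ℕ) : ∀ x ∈ Set.Icc (0:ℝ) 2,
    ∃ a ∈ preCantorSet n, ∃ b ∈ preCantorSet n, a + b = x := by
  induction n with
  | zero =>
    intro x hx
    simp only [Set.mem_Icc] at hx
    exact ⟨x/2, by constructor <;> linarith, x/2, by constructor <;> linarith, by ring⟩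
  | succ n ih =>
    intro x hx
    simp only [Set.mem_Icc] at hx
    rcases le_or_gt x (2/3) with h1 | h1
    · obtain ⟨a, ha, b, hb, hab⟩ := ih (3*x) ⟨by linarith, by linarith⟩
      exact ⟨a/3, Or.inl ⟨a, ha, rfl⟩, b/3, Or.inl ⟨b, hb, rfl⟩, by
        field_simp; linarith⟩
    rcases le_or_gt x (4/3) with h2 | h2
    · obtain ⟨a, ha, b, hb, hab⟩ := ih (3*x - 2) ⟨by linarith, by linarith⟩
      exact ⟨a/3, Or.inl ⟨a, ha, rfl⟩, (2+b)/3, Or.inr ⟨b, hb, rfl⟩, by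
        field_simp; linarith⟩
    · obtain ⟨a, ha, b, hb, hab⟩ := ih (3*x - 4) ⟨by linarith, by linarith⟩
      exact ⟨(2+a)/3, Or.inr ⟨a, ha, rfl⟩, (2+b)/3, Or.inr ⟨b, hb, rfl⟩, by
        field_simp; linarith⟩

lemma cantorSet_sum {x : ℝ} (hx : x ∈ Set.Icc (0:ℝ) 2) :
    ∃ a ∈ cantorSet, ∃ b ∈ cantorSet, a + b = x := by
  set K : ℕ → Set (ℝ × ℝ) :=
    fun n => {p | p.1 ∈ preCantorSet n ∧ p.2 ∈ preCantorSet n ∧ p.1 + p.2 = x} with hK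
  have hsub : ∀ n, preCantorSet n ⊆ Set.Icc (0:ℝ) 1 := by
    intro n
    induction n with
    | zero => exact le_refl _
    | succ n ih => exact (preCantorSet_antitone' n).trans ih
  have hclosed : ∀ n, IsClosed (K n) := by
    intro n
    exact IsClosed.inter ((isClosed_preCantorSet n).preimage continuous_fst)
      (IsClosed.inter ((isClosed_preCantorSet n).preimage continuous_snd)
        (isClosed_eq (continuous_fst.add continuous_snd) continuous_const))
  have hcompact : ∀ n, IsCompact (K n) := by
    intro n
    apply IsCompact.of_isClosed_subset (isCompact_Icc.prod isCompact_Icc) (hclosed n)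
    rintro ⟨a, b⟩ ⟨ha, hb, _⟩
    exact ⟨hsub n ha, hsub n hb⟩
  have hne : ∀ n, (K n).Nonempty := by
    intro n
    obtain ⟨a, ha, b, hb, hab⟩ := preCantorSet_sum n x hx
    exact ⟨(a, b), ha, hb, hab⟩
  have hmono : ∀ n, K (n + 1) ⊆ K n := by
    rintro n ⟨a, b⟩ ⟨ha, hb, hab⟩
    exact ⟨preCantorSet_antitone' n ha, preCantorSet_antitone' n hb, hab⟩
  obtain ⟨⟨a, b⟩, hp⟩ :=
    IsCompact.nonempty_iInter_of_sequence_nonempty_isCompact_isClosed K hmono hne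
      (hcompact 0) hclosed
  simp only [Set.mem_iInter] at hp
  refine ⟨a, Set.mem_iInter.mpr fun n => (hp n).1,
          b, Set.mem_iInter.mpr fun n => (hp n).2.1, (hp 0).2.2⟩

/-- For the Cantor ternary set `C ⊆ [0,1]`, one has `½C + ½C = [0,1]`. -/
theorem stmt_7 :
    (2⁻¹ : ℝ) • cantorSet + (2⁻¹ : ℝ) • cantorSet = Set.Icc (0 : ℝ) 1 := by
  ext x
  constructor
  · rintro ⟨u, ⟨a, ha, rfl⟩, v, ⟨b, hb, rfl⟩, rfl⟩
    have ha' := cantorSet_subset_unitInterval ha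
    have hb' := cantorSet_subset_unitInterval hb
    simp only [Set.mem_Icc, smul_eq_mul] at ha' hb' ⊢
    constructor <;> nlinarith [ha'.1, ha'.2, hb'.1, hb'.2]
  · intro hx
    simp only [Set.mem_Icc] at hx
    obtain ⟨a, ha, b, hb, hab⟩ := cantorSet_sum (x := 2*x) ⟨by linarith, by linarith⟩
    exact ⟨2⁻¹ * a, ⟨a, ha, rfl⟩, 2⁻¹ * b, ⟨b, hb, rfl⟩, by
      simp only [smul_eq_mul]; linarith⟩
end

section
/- Let γ : [a,b] → ℝ³ be a rectifiable curve with range Γ and length L. Then for every ε > 0 the Lebesgue outer measure of Γ + Γ in ℝ³ satisfies μ₃*(Γ + Γ) ≤ 64 ε (L + ε)². -/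
/-!
Let `φ` be the arclength function of `γ`, with values in `[0, L]`. Grouping the parameters by
`⌊φ / ε⌋` splits `Γ` into at most `L / ε + 1` pieces, each within distance `ε` of one of its
points, because `γ` moves no more than `φ` does. Hence `Γ + Γ` is covered by `(L / ε + 1)²` closed
balls of radius `2ε`, each inside a cube of side `4ε` and so of volume at most `64 ε³`.
-/

open Set MeasureTheory Metric Pointwise

section Cover

variable {E : Type*} [PseudoMetricSpace E]

theorem LocallyBoundedVariationOn.dist_le_variationOnFromTo_sub {α : Type*} [LinearOrder α]
    {f : α → E} {s : Set α} (hf : LocallyBoundedVariationOn f s) {a b c : α} (ha : a ∈ s)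
    (hb : b ∈ s) (hc : c ∈ s) (hbc : b ≤ c) :
    dist (f b) (f c) ≤ variationOnFromTo f s a c - variationOnFromTo f s a b := by
  rw [variationOnFromTo.sub_right hf ha hc hb, variationOnFromTo.eq_of_le f s hbc, dist_edist]
  exact ENNReal.toReal_mono (hf b c hb hc)
    (eVariationOn.edist_le f ⟨hb, le_rfl, hbc⟩ ⟨hc, hbc, le_rfl⟩)

theorem Nat.abs_sub_lt_one_of_floor_eq_floor {R : Type*} [Ring R] [LinearOrder R]
    [IsStrictOrderedRing R] [FloorRing R] {x y : R} (hx : 0 ≤ x) (hy : 0 ≤ y)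
    (h : ⌊x⌋₊ = ⌊y⌋₊) : |x - y| < 1 :=
  Int.abs_sub_lt_one_of_floor_eq_floor <| by
    rw [← Int.natCast_floor_eq_floor hx, ← Int.natCast_floor_eq_floor hy, h]

theorem exists_closedBall_cover_image_of_dist_le_abs_sub {α : Type*} [Nonempty E] {f : α → E}
    (φ : α → ℝ) {s : Set α} {V ε : ℝ} (hε : 0 < ε) (hφ : ∀ t ∈ s, φ t ∈ Icc 0 V)
    (hdist : ∀ t ∈ s, ∀ u ∈ s, dist (f t) (f u) ≤ |φ t - φ u|) :
    ∃ c : ℕ → E, f '' s ⊆ ⋃ i ∈ Finset.range (⌊V / ε⌋₊ + 1), closedBall (c i) ε := by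
  have hbin : ∀ i : ℕ, ∃ c : E, ∀ t ∈ s, ⌊φ t / ε⌋₊ = i → dist (f t) c ≤ ε := by
    intro i
    by_cases hi : ∃ u ∈ s, ⌊φ u / ε⌋₊ = i
    · obtain ⟨u, hu, rfl⟩ := hi
      refine ⟨f u, fun t ht htu => (hdist t ht u hu).trans ?_⟩
      have h := Nat.abs_sub_lt_one_of_floor_eq_floor (div_nonneg (hφ t ht).1 hε.le)
        (div_nonneg (hφ u hu).1 hε.le) htu
      rw [← sub_div, abs_div, abs_of_pos hε, div_lt_one hε] at h
      exact h.le
    · exact ⟨Classical.arbitrary E, fun t ht hti => absurd ⟨t, ht, hti⟩ hi⟩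
  choose c hc using hbin
  refine ⟨c, ?_⟩
  rintro _ ⟨t, ht, rfl⟩
  refine mem_iUnion₂.2 ⟨⌊φ t / ε⌋₊, Finset.mem_range.2 (Nat.lt_succ_of_le ?_), hc _ t ht rfl⟩
  exact Nat.floor_le_floor (div_le_div_of_nonneg_right (hφ t ht).2 hε.le)

theorem BoundedVariationOn.exists_closedBall_cover_image {α : Type*} [LinearOrder α]
    {f : α → E} {s : Set α} {a : α} (hf : BoundedVariationOn f s) (ha : IsLeast s a) {ε : ℝ}
    (hε : 0 < ε) :
    ∃ c : ℕ → E, f '' s ⊆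
      ⋃ i ∈ Finset.range (⌊(eVariationOn f s).toReal / ε⌋₊ + 1), closedBall (c i) ε := by
  have : Nonempty E := ⟨f a⟩
  refine exists_closedBall_cover_image_of_dist_le_abs_sub (variationOnFromTo f s a) hε
    (fun t ht => ⟨variationOnFromTo.nonneg_of_le f s (ha.2 ht),
      (le_abs_self _).trans (variationOnFromTo.abs_le_eVariationOn hf)⟩) fun t ht u hu => ?_
  rcases le_total t u with htu | hut
  · rw [abs_sub_comm]
    exact (hf.locallyBoundedVariationOn.dist_le_variationOnFromTo_sub ha.1 ht hu htu).trans
      (le_abs_self _)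
  · rw [dist_comm]
    exact (hf.locallyBoundedVariationOn.dist_le_variationOnFromTo_sub ha.1 hu ht hut).trans
      (le_abs_self _)

end Cover

theorem add_subset_biUnion_closedBall_add {ι κ E : Type*} [SeminormedAddCommGroup E]
    {A B : Set E} {I : Finset ι} {J : Finset κ} {c : ι → E} {d : κ → E} {r r' : ℝ}
    (hA : A ⊆ ⋃ i ∈ I, closedBall (c i) r) (hB : B ⊆ ⋃ j ∈ J, closedBall (d j) r') :
    A + B ⊆ ⋃ p ∈ I ×ˢ J, closedBall (c p.1 + d p.2) (r + r') := by
  rintro _ ⟨x, hx, y, hy, rfl⟩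
  obtain ⟨i, hi, hxi⟩ := mem_iUnion₂.1 (hA hx)
  obtain ⟨j, hj, hyj⟩ := mem_iUnion₂.1 (hB hy)
  exact mem_iUnion₂.2 ⟨(i, j), Finset.mem_product.2 ⟨hi, hj⟩,
    (dist_add_add_le _ _ _ _).trans (add_le_add hxi hyj)⟩

theorem EuclideanSpace.volume_closedBall_le {ι : Type*} [Fintype ι] (x : EuclideanSpace ℝ ι)
    {r : ℝ} (hr : 0 ≤ r) :
    volume (closedBall x r) ≤ ENNReal.ofReal ((2 * r) ^ Fintype.card ι) := by
  have hsub : closedBall x r ⊆ WithLp.ofLp ⁻¹' closedBall (WithLp.ofLp x) r := by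
    intro y hy
    rw [mem_preimage, mem_closedBall, dist_pi_le_iff hr]
    intro i
    exact (PiLp.dist_apply_le y x i).trans hy
  calc volume (closedBall x r) ≤ volume (WithLp.ofLp ⁻¹' closedBall (WithLp.ofLp x) r) :=
        measure_mono hsub
    _ ≤ volume (closedBall (WithLp.ofLp x) r) :=
        (PiLp.volume_preserving_ofLp ι).measure_preimage_le _
    _ = ENNReal.ofReal ((2 * r) ^ Fintype.card ι) := Real.volume_pi_closedBall _ hr

theorem Nat.floor_div_add_one_mul_le {V ε : ℝ} (hV : 0 ≤ V) (hε : 0 < ε) :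
    ((⌊V / ε⌋₊ + 1 : ℕ) : ℝ) * ε ≤ V + ε := by
  have h := Nat.floor_le (div_nonneg hV hε.le)
  rw [le_div_iff₀ hε] at h
  push_cast
  linarith

theorem stmt_13_general (a b : ℝ) (γ : ℝ → EuclideanSpace ℝ (Fin 3))
    (hrect : BoundedVariationOn γ (Set.Icc a b))
    (L : ℝ) (hL : L = (eVariationOn γ (Set.Icc a b)).toReal)
    (Γ : Set (EuclideanSpace ℝ (Fin 3))) (hΓ : Γ = γ '' Set.Icc a b)
    (ε : ℝ) (hε : 0 < ε) :
    volume (Γ + Γ) ≤ ENNReal.ofReal (64 * ε * (L + ε) ^ 2) := by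
  rcases lt_or_ge b a with hba | hab
  · simp [hΓ, Icc_eq_empty_of_lt hba]
  set n := ⌊L / ε⌋₊ + 1
  obtain ⟨c, hc⟩ := hrect.exists_closedBall_cover_image (isLeast_Icc hab) hε
  rw [← hL, ← hΓ] at hc
  have hcover := add_subset_biUnion_closedBall_add hc hc
  have hball : ∀ p ∈ Finset.range n ×ˢ Finset.range n,
      volume (closedBall (c p.1 + c p.2) (ε + ε)) ≤ ENNReal.ofReal (64 * ε ^ 3) := fun p _ =>
    (EuclideanSpace.volume_closedBall_le _ (by positivity)).trans_eq <| by
      rw [Fintype.card_fin]; ring_nf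
  have hnε : (n : ℝ) * ε ≤ L + ε := Nat.floor_div_add_one_mul_le (hL ▸ ENNReal.toReal_nonneg) hε
  calc volume (Γ + Γ) ≤ ∑ p ∈ Finset.range n ×ˢ Finset.range n,
        volume (closedBall (c p.1 + c p.2) (ε + ε)) :=
        (measure_mono hcover).trans (measure_biUnion_finset_le _ _)
    _ ≤ (n * n : ℕ) • ENNReal.ofReal (64 * ε ^ 3) := by
        simpa using Finset.sum_le_card_nsmul _ _ _ hball
    _ = ENNReal.ofReal (64 * ε * ((n : ℝ) * ε) ^ 2) := by
        rw [nsmul_eq_mul, ← ENNReal.ofReal_natCast, ← ENNReal.ofReal_mul (by positivity)]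
        push_cast; ring_nf
    _ ≤ ENNReal.ofReal (64 * ε * (L + ε) ^ 2) := by
        gcongr

/-- If `γ : [a,b] → ℝ³` is a rectifiable curve with range `Γ` and length `L`, then for
every `ε > 0` the Lebesgue outer measure of `Γ + Γ` satisfies
`μ₃*(Γ + Γ) ≤ 64 ε (L + ε)²`. -/
theorem stmt_13 (a b : ℝ) (γ : ℝ → EuclideanSpace ℝ (Fin 3))
    (hcont : ContinuousOn γ (Set.Icc a b))
    (hrect : BoundedVariationOn γ (Set.Icc a b))
    (L : ℝ) (hL : L = (eVariationOn γ (Set.Icc a b)).toReal)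
    (Γ : Set (EuclideanSpace ℝ (Fin 3))) (hΓ : Γ = γ '' Set.Icc a b)
    (ε : ℝ) (hε : 0 < ε) :
    volume (Γ + Γ) ≤ ENNReal.ofReal (64 * ε * (L + ε) ^ 2) :=
  stmt_13_general a b γ hrect L hL Γ hΓ ε hε
end

section
/- Let K ⊆ ℝ² be a compact convex set with nonempty interior and let Γ be its topological boundary (the range of a Jordan curve bounding the convex set). Then ½(Γ + Γ) equals the convex hull of Γ, i.e., ½(Γ + Γ) = K. -/
open Set Pointwise Topology

/-- Key lemma: every point of a compact convex body is the midpoint of two frontier points. -/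
lemma midpoint_frontier_aux (K : Set (EuclideanSpace ℝ (Fin 2)))
    (hKc : IsCompact K) (hKconv : Convex ℝ K) {x : EuclideanSpace ℝ (Fin 2)} (hx : x ∈ K) :
    ∃ p ∈ frontier K, ∃ q ∈ frontier K, x = (2⁻¹ : ℝ) • (p + q) := by
  by_cases hxf : x ∈ frontier K
  · refine ⟨x, hxf, x, hxf, ?_⟩
    rw [smul_add]
    module
  -- then x is interior
  have hxint : x ∈ interior K := by
    rw [hKc.isClosed.frontier_eq, Set.mem_diff, not_and, not_not] at hxf
    exact hxf hx
  -- work with the translated body `s`, a convex closed neighborhood of 0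
  set h : EuclideanSpace ℝ (Fin 2) ≃ₜ EuclideanSpace ℝ (Fin 2) := Homeomorph.addLeft x with hh
  set s : Set (EuclideanSpace ℝ (Fin 2)) := h ⁻¹' K with hs
  have hsconv : Convex ℝ s := hKconv.translate_preimage_right x
  have hs0 : s ∈ 𝓝 (0 : EuclideanSpace ℝ (Fin 2)) := by
    have : K ∈ 𝓝 (h 0) := by
      refine mem_nhds_iff.2 ⟨interior K, interior_subset, isOpen_interior, ?_⟩
      simpa [hh] using hxint
    exact h.continuous.continuousAt.preimage_mem_nhds this
  have hsb : Bornology.IsVonNBounded ℝ s := by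
    rw [NormedSpace.isVonNBounded_iff]
    have : IsCompact s := by
      have : s = h.symm '' K := (Equiv.image_eq_preimage_symm h.symm.toEquiv K).symm ▸ rfl
      rw [this]
      exact hKc.image h.symm.continuous
    exact this.isBounded
  have habs : Absorbent ℝ s := absorbent_nhds_zero hs0
  -- the moving unit vector
  set u : ℝ → EuclideanSpace ℝ (Fin 2) := fun θ =>
    Real.cos θ • EuclideanSpace.single (0 : Fin 2) (1 : ℝ) +
      Real.sin θ • EuclideanSpace.single (1 : Fin 2) (1 : ℝ) with hu
  have hucont : Continuous u := by fun_prop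
  have huπ : u Real.pi = -u 0 := by simp [hu]
  have hune : ∀ θ, u θ ≠ 0 := by
    intro θ h0
    have h1 : u θ (0 : Fin 2) = Real.cos θ := by simp [hu, EuclideanSpace.single_apply]
    have h2 : u θ (1 : Fin 2) = Real.sin θ := by simp [hu, EuclideanSpace.single_apply]
    have := Real.sin_sq_add_cos_sq θ
    rw [h0] at h1 h2
    simp at h1 h2
    rw [← h1, ← h2] at this
    norm_num at this
  -- find a direction where the gauge is symmetric
  set f : ℝ → ℝ := fun θ => gauge s (u θ) - gauge s (-u θ) with hf
  have hfc : Continuous f := by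
    have hg : Continuous (gauge s) := continuous_gauge hsconv hs0
    fun_prop
  have hfπ : f Real.pi = -f 0 := by simp only [hf, huπ, neg_neg]; ring
  have : ∃ θ ∈ Set.Icc 0 Real.pi, f θ = 0 := by
    rcases le_total (f 0) 0 with h0 | h0
    · have : (0 : ℝ) ∈ Set.Icc (f 0) (f Real.pi) := ⟨h0, by rw [hfπ]; linarith⟩
      have := intermediate_value_Icc Real.pi_pos.le hfc.continuousOn this
      exact ⟨this.choose, this.choose_spec.1, this.choose_spec.2⟩
    · have : (0 : ℝ) ∈ Set.Icc (f Real.pi) (f 0) := ⟨by rw [hfπ]; linarith, h0⟩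
      have := intermediate_value_Icc' Real.pi_pos.le hfc.continuousOn this
      exact ⟨this.choose, this.choose_spec.1, this.choose_spec.2⟩
  obtain ⟨θ, -, hθ⟩ := this
  set c : ℝ := gauge s (u θ) with hc
  have hcpos : 0 < c := (gauge_pos habs hsb).2 (hune θ)
  have hgneg : gauge s (-u θ) = c := by
    have := hθ; rw [hf] at this; simp at this; linarith [this]
  set p₀ : EuclideanSpace ℝ (Fin 2) := c⁻¹ • u θ with hp₀
  have hgp : gauge s p₀ = 1 := by
    rw [hp₀, gauge_smul_of_nonneg (inv_nonneg.2 hcpos.le), smul_eq_mul, ← hc,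
      inv_mul_cancel₀ hcpos.ne']
  have hgq : gauge s (-p₀) = 1 := by
    rw [hp₀, ← smul_neg, gauge_smul_of_nonneg (inv_nonneg.2 hcpos.le), smul_eq_mul, hgneg,
      inv_mul_cancel₀ hcpos.ne']
  have hpf : p₀ ∈ frontier s := (gauge_eq_one_iff_mem_frontier hsconv hs0).1 hgp
  have hqf : -p₀ ∈ frontier s := (gauge_eq_one_iff_mem_frontier hsconv hs0).1 hgq
  rw [hs, ← h.preimage_frontier] at hpf hqf
  refine ⟨x + p₀, ?_, x + -p₀, ?_, ?_⟩
  · simpa [hh] using hpf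
  · simpa [hh] using hqf
  · rw [smul_add]; module

/-- If `K ⊆ ℝ²` is a compact convex set with nonempty interior and `Γ` is its topological
boundary, then `½(Γ + Γ)` equals the convex hull of `Γ`, namely `K`. -/
theorem stmt_14 (K : Set (EuclideanSpace ℝ (Fin 2)))
    (hKc : IsCompact K) (hKconv : Convex ℝ K) (hKint : (interior K).Nonempty)
    (Γ : Set (EuclideanSpace ℝ (Fin 2))) (hΓ : Γ = frontier K) :
    (2⁻¹ : ℝ) • (Γ + Γ) = convexHull ℝ Γ ∧ convexHull ℝ Γ = K := by
  subst hΓ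
  have hΓK : frontier K ⊆ K := hKc.isClosed.frontier_subset
  have hhalf : (2⁻¹ : ℝ) • (frontier K + frontier K) = K := by
    apply Subset.antisymm
    · rintro y ⟨z, ⟨p, hp, q, hq, rfl⟩, rfl⟩
      have := hKconv (hΓK hp) (hΓK hq) (by norm_num : (0:ℝ) ≤ 2⁻¹)
        (by norm_num : (0:ℝ) ≤ 2⁻¹) (by norm_num)
      simpa [smul_add] using this
    · intro y hy
      obtain ⟨p, hp, q, hq, rfl⟩ := midpoint_frontier_aux K hKc hKconv hy
      exact ⟨p + q, ⟨p, hp, q, hq, rfl⟩, rfl⟩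
  have hhull : convexHull ℝ (frontier K) = K := by
    apply Subset.antisymm
    · exact (convexHull_mono hΓK).trans hKconv.convexHull_eq.subset
    · intro y hy
      obtain ⟨p, hp, q, hq, rfl⟩ := midpoint_frontier_aux K hKc hKconv hy
      have : (2⁻¹ : ℝ) • (p + q) ∈ segment ℝ p q :=
        ⟨2⁻¹, 2⁻¹, by norm_num, by norm_num, by norm_num, by rw [smul_add]⟩
      exact segment_subset_convexHull hp hq this
  exact ⟨hhalf.trans hhull.symm, hhull⟩
end

section
/- For any bounded nonempty set Γ ⊆ ℝⁿ, the sequence of sets Aₖ = (1/k)(Γ + Γ + … + Γ) (the Minkowski sum of k copies of Γ, scaled by 1/k) converges in the Hausdorff metric to the convex hull of Γ as k → ∞. -/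
open Set Filter Pointwise

/-- The Minkowski sum of `k` copies of `Γ` (`{0}` for `k = 0`). -/
def minkowskiSumIter {n : ℕ} (Γ : Set (EuclideanSpace ℝ (Fin n))) :
    ℕ → Set (EuclideanSpace ℝ (Fin n))
  | 0 => {0}
  | k + 1 => minkowskiSumIter Γ k + Γ

section aux

variable {n : ℕ} {Γ : Set (EuclideanSpace ℝ (Fin n))}

lemma mink_add (Γ : Set (EuclideanSpace ℝ (Fin n))) (a b : ℕ) :
    minkowskiSumIter Γ (a + b) = minkowskiSumIter Γ a + minkowskiSumIter Γ b := by
  induction b with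
  | zero =>
      simp [minkowskiSumIter, Set.singleton_zero]
  | succ b ih =>
      show minkowskiSumIter Γ (a + b) + Γ = _
      rw [ih]
      show minkowskiSumIter Γ a + minkowskiSumIter Γ b + Γ
        = minkowskiSumIter Γ a + (minkowskiSumIter Γ b + Γ)
      rw [add_assoc]

lemma nsmul_mem_mink {v : EuclideanSpace ℝ (Fin n)} (hv : v ∈ Γ) :
    ∀ m : ℕ, m • v ∈ minkowskiSumIter Γ m
  | 0 => by simp [minkowskiSumIter]
  | m + 1 => by
      rw [succ_nsmul]
      exact Set.add_mem_add (nsmul_mem_mink hv m) hv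

lemma sum_mem_mink (t : Finset (EuclideanSpace ℝ (Fin n)))
    (m : EuclideanSpace ℝ (Fin n) → ℕ) (ht : ↑t ⊆ Γ) :
    (∑ x ∈ t, m x • x) ∈ minkowskiSumIter Γ (∑ x ∈ t, m x) := by
  classical
  induction t using Finset.induction with
  | empty => simp [minkowskiSumIter]
  | @insert a s hx ih =>
      have ha : a ∈ Γ := ht (by simp)
      have hs : ↑s ⊆ Γ := fun y hy => ht (by simp [hy])
      rw [Finset.sum_insert hx, Finset.sum_insert hx, mink_add]
      exact Set.add_mem_add (nsmul_mem_mink ha _) (ih hs)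

lemma mink_subset_smul_hull (hne : Γ.Nonempty) :
    ∀ k : ℕ, minkowskiSumIter Γ k ⊆ (k : ℝ) • (convexHull ℝ Γ)
  | 0 => by
      rw [show ((0 : ℕ) : ℝ) = 0 by norm_num,
        Set.zero_smul_set (hne.mono (subset_convexHull ℝ Γ))]
      exact subset_rfl
  | k + 1 => by
      have h1 : minkowskiSumIter Γ (k + 1) ⊆ (k : ℝ) • (convexHull ℝ Γ)
          + (1 : ℝ) • (convexHull ℝ Γ) := by
        apply Set.add_subset_add (mink_subset_smul_hull hne k)
        rw [one_smul]
        exact subset_convexHull ℝ Γ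
      refine h1.trans ?_
      rw [← (convex_convexHull ℝ Γ).add_smul (by positivity : (0:ℝ) ≤ (k:ℝ))
        (by norm_num : (0:ℝ) ≤ (1:ℝ))]
      push_cast
      exact subset_rfl

lemma avg_subset_hull (hne : Γ.Nonempty) {k : ℕ} (hk : 1 ≤ k) :
    ((k : ℝ)⁻¹) • minkowskiSumIter Γ k ⊆ convexHull ℝ Γ := by
  rintro _ ⟨y, hy, rfl⟩
  obtain ⟨c, hc, rfl⟩ := mink_subset_smul_hull hne k hy
  show ((k : ℝ)⁻¹) • ((k : ℝ) • c) ∈ _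
  rw [smul_smul, inv_mul_cancel₀ (Nat.cast_pos.mpr hk).ne', one_smul]
  exact hc

lemma hull_approx {R : ℝ} (hne : Γ.Nonempty) (hR : Γ ⊆ Metric.closedBall 0 R)
    {k : ℕ} (hk : 1 ≤ k) {x : EuclideanSpace ℝ (Fin n)} (hx : x ∈ convexHull ℝ Γ) :
    ∃ y ∈ ((k : ℝ)⁻¹) • minkowskiSumIter Γ k, dist x y ≤ 2 * (n + 1) * R / k := by
  classical
  obtain ⟨γ0, hγ0⟩ := hne
  have hR0 : 0 ≤ R := le_trans (norm_nonneg γ0) (by simpa using hR hγ0)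
  have hkR : (0:ℝ) < k := by exact_mod_cast hk
  -- Carathéodory
  rw [convexHull_eq_union] at hx
  simp only [Set.mem_iUnion] at hx
  obtain ⟨t, hts, hai, hxt⟩ := hx
  have hcard : (t.card : ℝ) ≤ n + 1 := by
    have := hai.card_le_finrank_succ
    rw [Fintype.card_coe] at this
    have h2 : Module.finrank ℝ (vectorSpan ℝ (Set.range ((↑) : t → EuclideanSpace ℝ (Fin n))))
        ≤ n := by
      have := Submodule.finrank_le (vectorSpan ℝ (Set.range ((↑) : t → EuclideanSpace ℝ (Fin n))))
      rwa [finrank_euclideanSpace_fin] at this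
    exact_mod_cast this.trans (by omega)
  rw [Finset.convexHull_eq] at hxt
  obtain ⟨w, hw0, hw1, hwx⟩ := hxt
  rw [Finset.centerMass_eq_of_sum_1 _ _ hw1] at hwx
  simp only [id] at hwx
  -- rounding
  set m : EuclideanSpace ℝ (Fin n) → ℕ := fun v => ⌊(k : ℝ) * w v⌋₊ with hm
  set M : ℕ := ∑ v ∈ t, m v with hM
  have hfloor_le : ∀ v ∈ t, (m v : ℝ) ≤ (k : ℝ) * w v := fun v hv =>
    Nat.floor_le (mul_nonneg hkR.le (hw0 v hv))
  have hMk : (M : ℝ) ≤ (k : ℝ) := by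
    have : (M : ℝ) ≤ ∑ v ∈ t, (k : ℝ) * w v := by
      rw [hM]; push_cast
      exact Finset.sum_le_sum hfloor_le
    rwa [← Finset.mul_sum, hw1, mul_one] at this
  have hMk' : M ≤ k := by exact_mod_cast hMk
  have hkM : ((k - M : ℕ) : ℝ) = (k : ℝ) - M := by
    rw [Nat.cast_sub hMk']
  -- the approximating point
  set z : EuclideanSpace ℝ (Fin n) := (∑ v ∈ t, m v • v) + (k - M) • γ0 with hz
  have hzmem : z ∈ minkowskiSumIter Γ k := by
    have h1 : (∑ v ∈ t, m v • v) ∈ minkowskiSumIter Γ M := sum_mem_mink t m hts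
    have h2 : (k - M) • γ0 ∈ minkowskiSumIter Γ (k - M) := nsmul_mem_mink hγ0 _
    have := Set.add_mem_add h1 h2
    rwa [← mink_add, Nat.add_sub_cancel' hMk'] at this
  refine ⟨(k : ℝ)⁻¹ • z, Set.smul_mem_smul_set hzmem, ?_⟩
  -- bound k - M ≤ n + 1
  have hfrac : (k : ℝ) - M ≤ (n + 1 : ℝ) := by
    have h1 : (k : ℝ) - M = ∑ v ∈ t, ((k : ℝ) * w v - m v) := by
      rw [Finset.sum_sub_distrib, ← Finset.mul_sum, hw1, mul_one, hM]
      push_cast; ring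
    have h2 : ∑ v ∈ t, ((k : ℝ) * w v - m v) ≤ ∑ v ∈ t, (1 : ℝ) := by
      refine Finset.sum_le_sum fun v hv => ?_
      have := Nat.lt_floor_add_one ((k : ℝ) * w v)
      simp only [hm]
      linarith
    rw [h1]
    simp only [Finset.sum_const, nsmul_eq_mul, mul_one] at h2
    exact h2.trans hcard
  have hfrac0 : (0:ℝ) ≤ (k : ℝ) - M := by linarith
  -- compute the difference
  have hdiff : x - (k : ℝ)⁻¹ • z
      = (∑ v ∈ t, (w v - (m v : ℝ) / k) • v) - (((k : ℝ) - M) / k) • γ0 := by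
    rw [hz, smul_add, Finset.smul_sum, ← hwx, sub_add_eq_sub_sub, ← Finset.sum_sub_distrib]
    congr 1
    · refine Finset.sum_congr rfl fun v hv => ?_
      rw [← Nat.cast_smul_eq_nsmul ℝ (m v) v, smul_smul, ← sub_smul]
      congr 1
      rw [inv_mul_eq_div]
    · rw [← Nat.cast_smul_eq_nsmul ℝ (k - M) γ0, smul_smul, hkM, inv_mul_eq_div]
  have hnorm : dist x ((k : ℝ)⁻¹ • z) ≤ 2 * (n + 1) * R / k := by
    rw [dist_eq_norm, hdiff]
    have h1 : ‖(∑ v ∈ t, (w v - (m v : ℝ) / k) • v) - (((k : ℝ) - M) / k) • γ0‖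
        ≤ (∑ v ∈ t, (w v - (m v : ℝ) / k) * R) + (((k : ℝ) - M) / k) * R := by
      refine (norm_sub_le _ _).trans (add_le_add ?_ ?_)
      · refine (norm_sum_le _ _).trans (Finset.sum_le_sum fun v hv => ?_)
        rw [norm_smul, Real.norm_eq_abs]
        have hge : (0:ℝ) ≤ w v - (m v : ℝ) / k := by
          have h := hfloor_le v hv
          have h' : (m v : ℝ) / k ≤ w v := by
            rw [div_le_iff₀ hkR]; linarith
          linarith
        rw [abs_of_nonneg hge]
        · exact mul_le_mul_of_nonneg_left (by simpa using hR (hts hv)) hge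
      · rw [norm_smul, Real.norm_eq_abs, abs_of_nonneg (by positivity)]
        exact mul_le_mul_of_nonneg_left (by simpa using hR hγ0) (by positivity)
    have h2 : ∑ v ∈ t, (w v - (m v : ℝ) / k) = ((k : ℝ) - M) / k := by
      rw [Finset.sum_sub_distrib, hw1, ← Finset.sum_div]
      rw [hM]
      push_cast
      field_simp
    have h3 : (∑ v ∈ t, (w v - (m v : ℝ) / k) * R) = (((k : ℝ) - M) / k) * R := by
      rw [← Finset.sum_mul, h2]
    rw [h3] at h1
    refine h1.trans ?_
    have heq : (((k : ℝ) - M) / k) * R + (((k : ℝ) - M) / k) * R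
        = 2 * (((k : ℝ) - M)) * R / k := by ring
    rw [heq]
    gcongr
  exact hnorm

end aux

/-- For any bounded nonempty `Γ ⊆ ℝⁿ`, the sets `Aₖ = (1/k)(Γ + ⋯ + Γ)` (Minkowski sum of
`k` copies of `Γ`, scaled by `1/k`) converge to the convex hull of `Γ` in the Hausdorff
distance as `k → ∞`. -/
theorem stmt_16 (n : ℕ) (Γ : Set (EuclideanSpace ℝ (Fin n)))
    (hbd : Bornology.IsBounded Γ) (hne : Γ.Nonempty) :
    Tendsto
      (fun k : ℕ => Metric.hausdorffDist (((k : ℝ)⁻¹) • minkowskiSumIter Γ k)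
        (convexHull ℝ Γ))
      atTop (nhds 0) := by
  obtain ⟨R, hR⟩ := hbd.subset_closedBall 0
  obtain ⟨γ0, hγ0⟩ := id hne
  have hR0 : 0 ≤ R := le_trans (norm_nonneg γ0) (by simpa using hR hγ0)
  have key : ∀ k : ℕ, 1 ≤ k →
      Metric.hausdorffDist (((k : ℝ)⁻¹) • minkowskiSumIter Γ k) (convexHull ℝ Γ)
        ≤ 2 * (n + 1) * R / k := by
    intro k hk
    have hkR : (0:ℝ) < k := by exact_mod_cast hk
    refine Metric.hausdorffDist_le_of_mem_dist (by positivity) ?_ ?_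
    · intro x hx
      exact ⟨x, avg_subset_hull hne hk hx, by rw [dist_self]; positivity⟩
    · intro x hx
      obtain ⟨y, hy, hxy⟩ := hull_approx hne hR hk hx
      exact ⟨y, hy, hxy⟩
  apply squeeze_zero' (Eventually.of_forall fun k => Metric.hausdorffDist_nonneg)
    (eventually_atTop.2 ⟨1, key⟩)
  exact tendsto_const_div_atTop_nhds_zero_nat (2 * (n + 1) * R)
end
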